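/- arXiv:2110.00172 — 4 statements merged into one kernel-verified Lean document; each statement's English description precedes it below -/
import Mathlib

section
/- Let f : [0,∞) → [0,1] be nonincreasing with F(t) = ∫₀ᵗ f nondecreasing and F(t) → ∞, and let c > 0. Then for every τ₀ > 0 and every t ≥ τ₀, ∫₀ᵗ e^{c F(τ)} f(τ)² dτ ≤ (1/c)·( e^{c F(τ₀)} − e^{c F(0)} + f(τ₀) e^{c F(t)} − f(τ₀) e^{c F(τ₀)} ). -/
open Real MeasureTheory Filter intervalIntegral

theorem stmt_4 (f : ℝ → ℝ) (hf_meas : Measurable f)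
    (hf_range : ∀ t : ℝ, 0 ≤ t → f t ∈ Set.Icc (0:ℝ) 1)
    (hf_mono : AntitoneOn f (Set.Ici 0))
    (F : ℝ → ℝ) (hF : ∀ t : ℝ, F t = ∫ τ in (0:ℝ)..t, f τ)
    (hF_mono : MonotoneOn F (Set.Ici 0))
    (hF_top : Tendsto F atTop atTop)
    (c : ℝ) (hc : 0 < c) :
    ∀ τ₀ : ℝ, 0 < τ₀ → ∀ t : ℝ, τ₀ ≤ t →
      (∫ τ in (0:ℝ)..t, Real.exp (c * F τ) * (f τ) ^ 2) ≤
        (1 / c) * (Real.exp (c * F τ₀) - Real.exp (c * F 0)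
          + f τ₀ * Real.exp (c * F t) - f τ₀ * Real.exp (c * F τ₀)) := by
  intro τ₀ hτ₀ t ht
  have ht0 : (0:ℝ) ≤ t := le_trans hτ₀.le ht
  -- extend f to an antitone function on all of ℝ
  set g : ℝ → ℝ := fun x => f (max x 0) with hg_def
  have hg_meas : Measurable g := hf_meas.comp (measurable_id.max measurable_const)
  have hg_eq : ∀ x : ℝ, 0 ≤ x → g x = f x := fun x hx => by
    simp [hg_def, max_eq_left hx]
  have hg_range : ∀ x : ℝ, g x ∈ Set.Icc (0:ℝ) 1 := fun x =>
    hf_range _ (le_max_right x 0)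
  have hg_anti : Antitone g := fun x y hxy =>
    hf_mono (le_max_right x 0) (le_max_right y 0) (max_le_max hxy le_rfl)
  -- g is interval integrable everywhere
  have hg_int : ∀ a b : ℝ, IntervalIntegrable g volume a b := by
    intro a b
    apply (_root_.intervalIntegrable_const (c := (1:ℝ))).mono_fun
      (hg_meas.aestronglyMeasurable.restrict)
    filter_upwards with x
    have := hg_range x
    simp only [Real.norm_eq_abs, norm_one, abs_le]
    constructor <;> linarith [this.1, this.2]
  -- primitive of g
  set I : ℝ → ℝ := fun u => ∫ τ in (0:ℝ)..u, g τ with hI_def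
  have hI_cont : Continuous I := intervalIntegral.continuous_primitive hg_int 0
  have hFI : ∀ u : ℝ, 0 ≤ u → F u = I u := by
    intro u hu
    rw [hF u, hI_def]
    apply intervalIntegral.integral_congr
    intro x hx
    rw [Set.uIcc_of_le hu] at hx
    exact (hg_eq x hx.1).symm
  -- the antiderivative
  set G : ℝ → ℝ := fun u => (1 / c) * Real.exp (c * I u) with hG_def
  have hG_cont : Continuous G := continuous_const.mul ((continuous_const.mul hI_cont).rexp)
  set s : Set ℝ := {x | ¬ContinuousAt g x} with hs_def
  have hs : s.Countable := hg_anti.countable_not_continuousAt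
  have hG_deriv : ∀ x ∉ s, HasDerivAt G (Real.exp (c * I x) * g x) x := by
    intro x hx
    have hgx : ContinuousAt g x := not_not.mp hx
    have hI : HasDerivAt I (g x) x :=
      intervalIntegral.integral_hasDerivAt_right (hg_int 0 x)
        (hg_meas.stronglyMeasurable.stronglyMeasurableAtFilter) hgx
    have h2 : HasDerivAt G ((1 / c) * (Real.exp (c * I x) * (c * g x))) x :=
      ((hI.const_mul c).exp).const_mul (1 / c)
    convert h2 using 1
    field_simp
  -- interval integrability of the key integrands
  have key_int : ∀ (k : ℕ) (a b : ℝ),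
      IntervalIntegrable (fun τ => Real.exp (c * I τ) * (g τ) ^ k) volume a b := by
    intro k a b
    apply ((continuous_const.mul hI_cont).rexp.intervalIntegrable a b).mono_fun
      (((continuous_const.mul hI_cont).rexp.measurable.mul
        (hg_meas.pow_const k)).aestronglyMeasurable.restrict)
    filter_upwards with x
    have h1 := hg_range x
    have h2 : (0:ℝ) ≤ Real.exp (c * I x) := (Real.exp_pos _).le
    show ‖Real.exp (c * I x) * g x ^ k‖ ≤ ‖Real.exp (c * I x)‖
    rw [Real.norm_eq_abs, Real.norm_eq_abs, abs_of_nonneg h2,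
      abs_of_nonneg (mul_nonneg h2 (pow_nonneg h1.1 k))]
    calc Real.exp (c * I x) * g x ^ k ≤ Real.exp (c * I x) * 1 := by
          apply mul_le_mul_of_nonneg_left _ h2
          exact pow_le_one₀ h1.1 h1.2
      _ = Real.exp (c * I x) := mul_one _
  -- FTC on subintervals
  have ftc : ∀ a b : ℝ, a ≤ b →
      (∫ τ in a..b, Real.exp (c * I τ) * g τ) = G b - G a := by
    intro a b hab
    have := key_int 1 a b
    simp only [pow_one] at this
    exact integral_eq_of_hasDerivAt_off_countable_of_le G
      (fun τ => Real.exp (c * I τ) * g τ) hab hs hG_cont.continuousOn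
      (fun x hx => hG_deriv x hx.2) this
  -- rewrite the LHS integrand in terms of g and I
  have lhs_eq : (∫ τ in (0:ℝ)..t, Real.exp (c * F τ) * (f τ) ^ 2)
      = ∫ τ in (0:ℝ)..t, Real.exp (c * I τ) * (g τ) ^ 2 := by
    apply intervalIntegral.integral_congr
    intro x hx
    rw [Set.uIcc_of_le ht0] at hx
    simp only [hFI x hx.1, hg_eq x hx.1]
  rw [lhs_eq]
  -- split the integral at τ₀
  have hsplit : (∫ τ in (0:ℝ)..t, Real.exp (c * I τ) * (g τ) ^ 2)
      = (∫ τ in (0:ℝ)..τ₀, Real.exp (c * I τ) * (g τ) ^ 2)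
        + ∫ τ in τ₀..t, Real.exp (c * I τ) * (g τ) ^ 2 :=
    (intervalIntegral.integral_add_adjacent_intervals (key_int 2 0 τ₀) (key_int 2 τ₀ t)).symm
  rw [hsplit]
  -- bound on [0, τ₀]
  have hb1 : (∫ τ in (0:ℝ)..τ₀, Real.exp (c * I τ) * (g τ) ^ 2)
      ≤ ∫ τ in (0:ℝ)..τ₀, Real.exp (c * I τ) * g τ := by
    apply intervalIntegral.integral_mono_on hτ₀.le (key_int 2 0 τ₀)
    · have := key_int 1 0 τ₀; simpa using this
    · intro x hx
      have h1 := hg_range x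
      have h2 : (0:ℝ) ≤ Real.exp (c * I x) := (Real.exp_pos _).le
      have : g x ^ 2 ≤ g x := by nlinarith [h1.1, h1.2]
      exact mul_le_mul_of_nonneg_left this h2
  -- bound on [τ₀, t]
  have hb2 : (∫ τ in τ₀..t, Real.exp (c * I τ) * (g τ) ^ 2)
      ≤ ∫ τ in τ₀..t, g τ₀ * (Real.exp (c * I τ) * g τ) := by
    apply intervalIntegral.integral_mono_on ht (key_int 2 τ₀ t)
    · have := (key_int 1 τ₀ t).const_mul (g τ₀); simpa [mul_assoc] using this
    · intro x hx
      have h1 := hg_range x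
      have h2 : (0:ℝ) ≤ Real.exp (c * I x) := (Real.exp_pos _).le
      have h3 : g x ≤ g τ₀ := hg_anti hx.1
      have : g x ^ 2 ≤ g τ₀ * g x := by nlinarith [h1.1]
      calc Real.exp (c * I x) * g x ^ 2 ≤ Real.exp (c * I x) * (g τ₀ * g x) :=
            mul_le_mul_of_nonneg_left this h2
        _ = g τ₀ * (Real.exp (c * I x) * g x) := by ring
  have e1 : (∫ τ in (0:ℝ)..τ₀, Real.exp (c * I τ) * g τ) = G τ₀ - G 0 := ftc 0 τ₀ hτ₀.le
  have e2 : (∫ τ in τ₀..t, g τ₀ * (Real.exp (c * I τ) * g τ)) = g τ₀ * (G t - G τ₀) := by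
    rw [intervalIntegral.integral_const_mul, ftc τ₀ t ht]
  have hfτ₀ : g τ₀ = f τ₀ := hg_eq τ₀ hτ₀.le
  have hI0 : F 0 = I 0 := hFI 0 le_rfl
  have hIτ₀ : F τ₀ = I τ₀ := hFI τ₀ hτ₀.le
  have hIt : F t = I t := hFI t ht0
  calc (∫ τ in (0:ℝ)..τ₀, Real.exp (c * I τ) * (g τ) ^ 2)
        + (∫ τ in τ₀..t, Real.exp (c * I τ) * (g τ) ^ 2)
      ≤ (G τ₀ - G 0) + g τ₀ * (G t - G τ₀) := by
        rw [← e1, ← e2]; exact add_le_add hb1 hb2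
    _ = (1 / c) * (Real.exp (c * F τ₀) - Real.exp (c * F 0)
          + f τ₀ * Real.exp (c * F t) - f τ₀ * Real.exp (c * F τ₀)) := by
        rw [hG_def, hfτ₀, hI0, hIτ₀, hIt]; ring
end

section
/- Let c > 0, and let f : [0,∞) → [0,1] be nonincreasing with f(t) → 0 and F(t) = ∫₀ᵗ f(τ)dτ → ∞ as t → ∞. Then the quantity V(t) := (c/4)·e^{-2cF(t)}·∫₀ᵗ e^{2cF(τ)} f(τ)² dτ tends to 0 as t → ∞. -/
open Real MeasureTheory Filter intervalIntegral
open Topology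

theorem stmt_5 (c : ℝ) (hc : 0 < c) (f : ℝ → ℝ) (hf_meas : Measurable f)
    (hf_range : ∀ t : ℝ, 0 ≤ t → f t ∈ Set.Icc (0:ℝ) 1)
    (hf_mono : AntitoneOn f (Set.Ici 0))
    (hf_lim : Tendsto f atTop (nhds 0))
    (F : ℝ → ℝ) (hF : ∀ t : ℝ, F t = ∫ τ in (0:ℝ)..t, f τ)
    (hF_top : Tendsto F atTop atTop) :
    Tendsto (fun t : ℝ =>
        (c / 4) * Real.exp (-2 * c * F t) *
          ∫ τ in (0:ℝ)..t, Real.exp (2 * c * F τ) * (f τ) ^ 2)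
      atTop (nhds 0) := by
  -- f extended to be globally antitone
  set f₀ : ℝ → ℝ := fun x => f (max x 0) with hf₀def
  have hf₀ : Antitone f₀ := fun x y hxy => hf_mono (le_max_right x 0) (le_max_right y 0)
    (max_le_max hxy le_rfl)
  have hf₀eq : ∀ x : ℝ, 0 ≤ x → f₀ x = f x := fun x hx => by
    simp [hf₀def, max_eq_left hx]
  -- interval integrability of f on nonneg intervals
  have hfInt : ∀ a b : ℝ, 0 ≤ a → 0 ≤ b → IntervalIntegrable f volume a b := by
    intro a b ha hb
    constructor <;>
    · refine Measure.integrableOn_of_bounded (M := 1) (by simp) hf_meas.aestronglyMeasurable ?_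
      refine (ae_restrict_iff' measurableSet_Ioc).2 (ae_of_all _ fun x hx => ?_)
      have hx0 : (0:ℝ) ≤ x := le_trans (by positivity) hx.1.le
      have := hf_range x hx0
      rw [Real.norm_eq_abs, abs_of_nonneg this.1]
      exact this.2
  -- F additivity
  have hFadd : ∀ a b : ℝ, 0 ≤ a → 0 ≤ b → F b = F a + ∫ τ in a..b, f τ := by
    intro a b ha hb
    rw [hF a, hF b, ← intervalIntegral.integral_add_adjacent_intervals
      (hfInt 0 a le_rfl ha) (hfInt a b ha hb)]
  -- F is monotone on Ici 0
  have hFmono : MonotoneOn F (Set.Ici 0) := by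
    intro x hx y hy hxy
    rw [hFadd x y hx hy]
    have : 0 ≤ ∫ τ in x..y, f τ :=
      intervalIntegral.integral_nonneg hxy fun u hu => (hf_range u (le_trans hx hu.1)).1
    linarith
  -- F is continuous on Ici 0
  have hFcont : ContinuousOn F (Set.Ici 0) := by
    have : LipschitzOnWith 1 F (Set.Ici 0) := by
      apply LipschitzOnWith.of_dist_le_mul
      intro x hx y hy
      wlog hxy : y ≤ x generalizing x y
      · rw [dist_comm, dist_comm x y]; exact this y hy x hx (le_of_not_ge hxy)
      rw [Real.dist_eq, Real.dist_eq, hFadd y x hy hx]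
      have h1 : (∫ τ in y..x, f τ) ≤ ∫ τ in y..x, (1:ℝ) :=
        intervalIntegral.integral_mono_on hxy (hfInt y x hy hx) intervalIntegrable_const
          (fun u hu => (hf_range u (le_trans hy hu.1)).2)
      have h2 : 0 ≤ ∫ τ in y..x, f τ :=
        intervalIntegral.integral_nonneg hxy fun u hu => (hf_range u (le_trans hy hu.1)).1
      simp only [intervalIntegral.integral_const, smul_eq_mul, mul_one] at h1
      rw [abs_of_nonneg (by linarith : (0:ℝ) ≤ F y + (∫ τ in y..x, f τ) - F y)]
      rw [abs_of_nonneg (by linarith : (0:ℝ) ≤ x - y), NNReal.coe_one, one_mul]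
      linarith
    exact this.continuousOn
  -- rightLim of f₀ equals f₀ a.e.
  have hRLae : ∀ᵐ x : ℝ, Function.rightLim f₀ x = f₀ x := by
    have hcount : Set.Countable {x : ℝ | ¬ContinuousAt f₀ x} := hf₀.countable_not_continuousAt
    filter_upwards [hcount.ae_notMem volume] with x hx
    simp only [Set.mem_setOf_eq, not_not] at hx
    exact (hf₀.continuousWithinAt_Ioi_iff_rightLim_eq.1 hx.continuousWithinAt)
  -- rightLim bounds
  have hRL_nonneg : ∀ x : ℝ, 0 ≤ Function.rightLim f₀ x := by
    intro x
    have := hf₀.le_rightLim (lt_add_one x)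
    have h2 := (hf_range (max (x+1) 0) (le_max_right _ _)).1
    exact le_trans h2 this
  have hRL_le_one : ∀ x : ℝ, Function.rightLim f₀ x ≤ 1 := by
    intro x
    have := hf₀.rightLim_le (le_refl x)
    exact le_trans this (hf_range (max x 0) (le_max_right _ _)).2
  have hRLmeas : Measurable (Function.rightLim f₀) := hf₀.rightLim.measurable
  -- derivative of F from the right
  have hFd : ∀ x : ℝ, 0 < x →
      HasDerivWithinAt F (Function.rightLim f₀ x) (Set.Ioi x) x := by
    intro x hx
    have hmeas : StronglyMeasurableAtFilter f (𝓝[>] x) :=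
      ⟨Set.univ, Filter.univ_mem, hf_meas.stronglyMeasurable.aestronglyMeasurable.restrict⟩
    have ht0 : Tendsto f₀ (𝓝[>] x) (nhds (Function.rightLim f₀ x)) := hf₀.tendsto_rightLim x
    have hcg : f₀ =ᶠ[𝓝[>] x] f := by
      filter_upwards [self_mem_nhdsWithin] with y hy
      exact hf₀eq y (le_of_lt (lt_trans hx hy))
    have ht : Tendsto f (𝓝[>] x ⊓ MeasureTheory.ae volume)
        (nhds (Function.rightLim f₀ x)) :=
      (ht0.congr' hcg).mono_left inf_le_left
    have := intervalIntegral.integral_hasDerivWithinAt_of_tendsto_ae_right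
      (f := f) (a := 0) (b := x) (s := Set.Ici x) (t := Set.Ioi x)
      (hfInt 0 x le_rfl hx.le) hmeas ht
    have hFfun : F = fun u => ∫ τ in (0:ℝ)..u, f τ := funext hF
    rw [← hFfun] at this
    exact this.mono Set.Ioi_subset_Ici_self
  -- integrability of the main integrand on nonneg intervals
  have hφInt : ∀ a b : ℝ, 0 ≤ a → a ≤ b →
      IntervalIntegrable (fun τ => Real.exp (2*c*F τ) * f τ ^ 2) volume a b := by
    intro a b ha hab
    rw [intervalIntegrable_iff_integrableOn_Icc_of_le hab]
    have h1 : AEStronglyMeasurable (fun τ => Real.exp (2*c*F τ))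
        (volume.restrict (Set.Icc a b)) := by
      refine ContinuousOn.aestronglyMeasurable ?_ measurableSet_Icc
      exact (Real.continuous_exp.comp_continuousOn
        ((continuous_const.continuousOn).mul (hFcont.mono (fun x hx => le_trans ha hx.1))))
    refine ⟨h1.mul ((hf_meas.pow_const 2).aestronglyMeasurable.restrict),
      HasFiniteIntegral.restrict_of_bounded (C := Real.exp (2*c*F b))
        (by exact measure_Icc_lt_top) ?_⟩
    refine (ae_restrict_iff' measurableSet_Icc).2 (ae_of_all _ fun x hx => ?_)
    have hx0 : (0:ℝ) ≤ x := le_trans ha hx.1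
    have hfx := hf_range x hx0
    have hFle : F x ≤ F b := hFmono hx0 (le_trans hx0 hx.2) hx.2
    have h2 : (0:ℝ) ≤ Real.exp (2*c*F x) * f x ^ 2 := by positivity
    rw [Real.norm_eq_abs, abs_of_nonneg h2]
    have h3 : f x ^ 2 ≤ 1 := by nlinarith [hfx.1, hfx.2]
    calc Real.exp (2*c*F x) * f x ^ 2 ≤ Real.exp (2*c*F x) * 1 := by
          exact mul_le_mul_of_nonneg_left h3 (Real.exp_nonneg _)
      _ ≤ Real.exp (2*c*F b) := by
          rw [mul_one]; exact Real.exp_le_exp.2 (by nlinarith)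
  -- key bound
  have hkey : ∀ s t : ℝ, 0 ≤ s → s ≤ t →
      (∫ τ in s..t, Real.exp (2*c*F τ) * f τ ^ 2) ≤ f s / (2*c) * Real.exp (2*c*F t) := by
    intro s t hs hst
    set G : ℝ → ℝ := fun x => f s / (2*c) * Real.exp (2*c*F x) with hGdef
    set G' : ℝ → ℝ := fun x => f s / (2*c) * (Real.exp (2*c*F x) * (2*c*Function.rightLim f₀ x))
      with hG'def
    have hfs := hf_range s hs
    have hGcont : ContinuousOn G (Set.Icc s t) :=
      (continuous_const.continuousOn).mul (Real.continuous_exp.comp_continuousOn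
        ((continuous_const.continuousOn).mul (hFcont.mono (fun x hx => le_trans hs hx.1))))
    have hGderiv : ∀ x ∈ Set.Ioo s t, HasDerivWithinAt G (G' x) (Set.Ioi x) x := by
      intro x hx
      have hx0 : 0 < x := lt_of_le_of_lt hs hx.1
      have h1 : HasDerivWithinAt (fun y => 2*c*F y) (2*c*Function.rightLim f₀ x)
          (Set.Ioi x) x := (hFd x hx0).const_mul (2*c)
      exact (h1.exp).const_mul (f s / (2*c))
    have hG'int : IntegrableOn G' (Set.Icc s t) := by
      have hasm : AEStronglyMeasurable G' (volume.restrict (Set.Icc s t)) := by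
        refine AEStronglyMeasurable.mul aestronglyMeasurable_const ?_
        refine AEStronglyMeasurable.mul ?_ ?_
        · refine ContinuousOn.aestronglyMeasurable ?_ measurableSet_Icc
          exact Real.continuous_exp.comp_continuousOn
            ((continuous_const.continuousOn).mul (hFcont.mono (fun x hx => le_trans hs hx.1)))
        · exact (measurable_const.mul hRLmeas).aestronglyMeasurable.restrict
      refine ⟨hasm, HasFiniteIntegral.restrict_of_bounded
        (C := f s / (2*c) * (Real.exp (2*c*F t) * (2*c)))
        (by exact measure_Icc_lt_top) ?_⟩
      refine (ae_restrict_iff' measurableSet_Icc).2 (ae_of_all _ fun x hx => ?_)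
      have hx0 : (0:ℝ) ≤ x := le_trans hs hx.1
      have hFle : F x ≤ F t := hFmono hx0 (le_trans hx0 hx.2) hx.2
      have hR0 := hRL_nonneg x
      have hR1 := hRL_le_one x
      have hexp0 : (0:ℝ) ≤ Real.exp (2*c*F x) := Real.exp_nonneg _
      have hG'x : G' x = f s / (2*c) * (Real.exp (2*c*F x) * (2*c*Function.rightLim f₀ x)) := rfl
      have hnn : (0:ℝ) ≤ G' x := by
        rw [hG'x]
        exact mul_nonneg (div_nonneg hfs.1 (by positivity))
          (mul_nonneg hexp0 (mul_nonneg (by positivity) hR0))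
      rw [Real.norm_eq_abs, abs_of_nonneg hnn, hG'x]
      have hexp : Real.exp (2*c*F x) ≤ Real.exp (2*c*F t) :=
        Real.exp_le_exp.2 (by nlinarith)
      have hfs2c : 0 ≤ f s / (2*c) := div_nonneg hfs.1 (by positivity)
      refine mul_le_mul_of_nonneg_left ?_ hfs2c
      have key : 0 ≤ Real.exp (2*c*F x) * (2*c) * (1 - Function.rightLim f₀ x) :=
        mul_nonneg (mul_nonneg hexp0 (by linarith)) (by linarith)
      calc Real.exp (2*c*F x) * (2*c*Function.rightLim f₀ x)
          ≤ Real.exp (2*c*F x) * (2*c) := by nlinarith [key]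
        _ ≤ Real.exp (2*c*F t) * (2*c) := by nlinarith
    have step1 : (∫ τ in s..t, Real.exp (2*c*F τ) * f τ ^ 2) ≤ ∫ τ in s..t, G' τ := by
      refine intervalIntegral.integral_mono_ae_restrict hst (hφInt s t hs hst)
        ((intervalIntegrable_iff_integrableOn_Icc_of_le hst).2 hG'int) ?_
      filter_upwards [ae_restrict_of_ae hRLae, ae_restrict_mem measurableSet_Icc]
        with x hxeq hxmem
      have hx0 : (0:ℝ) ≤ x := le_trans hs hxmem.1
      have hfx := hf_range x hx0
      have hfle : f x ≤ f s := hf_mono hs hx0 hxmem.1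
      have : Function.rightLim f₀ x = f x := by rw [hxeq, hf₀eq x hx0]
      have hG'x : G' x = f s / (2*c) * (Real.exp (2*c*F x) * (2*c * f x)) := by
        show f s / (2*c) * (Real.exp (2*c*F x) * (2*c*Function.rightLim f₀ x)) = _
        rw [this]
      rw [hG'x]
      have hexp0 : (0:ℝ) ≤ Real.exp (2*c*F x) := Real.exp_nonneg _
      have h2c : (2*c) ≠ 0 := by positivity
      have : f s / (2*c) * (Real.exp (2*c*F x) * (2*c * f x))
          = Real.exp (2*c*F x) * (f s * f x) := by field_simp
      rw [this]
      have hmm : f x * f x ≤ f s * f x := mul_le_mul_of_nonneg_right hfle hfx.1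
      have : f x ^ 2 ≤ f s * f x := by nlinarith [hmm]
      nlinarith
    have step2 : (∫ τ in s..t, G' τ) ≤ G t - G s :=
      intervalIntegral.integral_le_sub_of_hasDeriv_right_of_le hst hGcont hGderiv hG'int
        (fun x _ => le_rfl)
    have hGs : 0 ≤ G s := by
      show 0 ≤ f s / (2*c) * Real.exp (2*c*F s)
      exact mul_nonneg (div_nonneg hfs.1 (by positivity)) (Real.exp_nonneg _)
    calc (∫ τ in s..t, Real.exp (2*c*F τ) * f τ ^ 2) ≤ G t - G s := le_trans step1 step2
      _ ≤ G t := by linarith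
      _ = f s / (2*c) * Real.exp (2*c*F t) := rfl
  -- now the main limit argument
  rw [Metric.tendsto_nhds]
  intro ε hε
  obtain ⟨s, hfs4, hs0⟩ :=
    ((hf_lim.eventually (gt_mem_nhds (show (0:ℝ) < 4*ε by linarith))).and
      (eventually_ge_atTop (0:ℝ))).exists
  set A : ℝ := ∫ τ in (0:ℝ)..s, Real.exp (2*c*F τ) * f τ ^ 2 with hA
  have hexp_lim : Tendsto (fun t => c/4 * A * Real.exp (-(2*c*F t))) atTop (nhds 0) := by
    have h1 : Tendsto (fun t => 2*c*F t) atTop atTop :=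
      hF_top.const_mul_atTop (by positivity)
    have h2 : Tendsto (fun t => Real.exp (-(2*c*F t))) atTop (nhds 0) :=
      Real.tendsto_exp_atBot.comp (tendsto_neg_atTop_atBot.comp h1)
    simpa using h2.const_mul (c/4 * A)
  have hev : ∀ᶠ t : ℝ in atTop, c/4 * A * Real.exp (-(2*c*F t)) < ε/2 := by
    have := hexp_lim.eventually (gt_mem_nhds (show (0:ℝ) < ε/2 by linarith))
    filter_upwards [this] with t ht using ht
  filter_upwards [hev, eventually_ge_atTop s] with t ht hts
  have ht0 : (0:ℝ) ≤ t := le_trans hs0 hts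
  have hsplit : (∫ τ in (0:ℝ)..t, Real.exp (2*c*F τ) * f τ ^ 2)
      = A + ∫ τ in s..t, Real.exp (2*c*F τ) * f τ ^ 2 := by
    rw [hA, intervalIntegral.integral_add_adjacent_intervals (hφInt 0 s le_rfl hs0)
      (hφInt s t hs0 hts)]
  have hAnn : 0 ≤ A :=
    intervalIntegral.integral_nonneg hs0 (fun u _ => by positivity)
  have hInn : 0 ≤ ∫ τ in (0:ℝ)..t, Real.exp (2*c*F τ) * f τ ^ 2 :=
    intervalIntegral.integral_nonneg ht0 (fun u _ => by positivity)
  have hVnn : 0 ≤ (c / 4) * Real.exp (-2 * c * F t) *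
      ∫ τ in (0:ℝ)..t, Real.exp (2 * c * F τ) * (f τ) ^ 2 :=
    mul_nonneg (by positivity) hInn
  rw [Real.dist_eq, sub_zero, abs_of_nonneg hVnn]
  have hkey' := hkey s t hs0 hts
  have hexp_pos : (0:ℝ) < Real.exp (-(2*c*F t)) := Real.exp_pos _
  have hmain : (c / 4) * Real.exp (-2 * c * F t) *
      (∫ τ in (0:ℝ)..t, Real.exp (2 * c * F τ) * (f τ) ^ 2)
      ≤ c/4 * A * Real.exp (-(2*c*F t)) + f s / 8 := by
    have hrw : (-2 : ℝ) * c * F t = -(2*c*F t) := by ring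
    rw [hrw, hsplit]
    have hb : (c/4) * Real.exp (-(2*c*F t)) *
        (A + ∫ τ in s..t, Real.exp (2*c*F τ) * f τ ^ 2)
        ≤ (c/4) * Real.exp (-(2*c*F t)) * (A + f s / (2*c) * Real.exp (2*c*F t)) := by
      have := mul_le_mul_of_nonneg_left hkey'
        (show (0:ℝ) ≤ (c/4) * Real.exp (-(2*c*F t)) by positivity)
      nlinarith
    refine le_trans hb ?_
    have hExp : Real.exp (-(2*c*F t)) * Real.exp (2*c*F t) = 1 := by
      rw [← Real.exp_add]; simp
    have : (c/4) * Real.exp (-(2*c*F t)) * (A + f s / (2*c) * Real.exp (2*c*F t))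
        = c/4 * A * Real.exp (-(2*c*F t))
          + c/4 * (f s / (2*c)) * (Real.exp (-(2*c*F t)) * Real.exp (2*c*F t)) := by ring
    rw [this, hExp]
    have : c/4 * (f s / (2*c)) * 1 = f s / 8 := by field_simp; ring
    rw [this]
  have hfs8 : f s / 8 < ε/2 := by linarith
  linarith
end

section
/- Let c > 0 and let f : [0,∞) → [1,∞) be nondecreasing with f(t) → ∞, and F(t) = ∫₀ᵗ f(τ) dτ. Then V(t) := (c/4)·e^{-2cF(t)}·∫₀ᵗ e^{2cF(τ)} f(τ)² dτ tends to +∞ as t → ∞; in particular for any τ₀ > 0 and t > τ₀, V(t) ≥ (f(τ₀)/8)·(1 − e^{-2c(F(t)−F(τ₀))}). -/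
open Real MeasureTheory Filter intervalIntegral

theorem stmt_6 (c : ℝ) (hc : 0 < c) (f : ℝ → ℝ) (hf_meas : Measurable f)
    (hf_range : ∀ t : ℝ, 0 ≤ t → 1 ≤ f t)
    (hf_mono : MonotoneOn f (Set.Ici 0))
    (hf_lim : Tendsto f atTop atTop)
    (F : ℝ → ℝ) (hF : ∀ t : ℝ, F t = ∫ τ in (0:ℝ)..t, f τ) :
    Tendsto (fun t : ℝ =>
        (c / 4) * Real.exp (-2 * c * F t) *
          ∫ τ in (0:ℝ)..t, Real.exp (2 * c * F τ) * (f τ) ^ 2)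
      atTop atTop ∧
    ∀ τ₀ : ℝ, 0 < τ₀ → ∀ t : ℝ, τ₀ < t →
      (f τ₀ / 8) * (1 - Real.exp (-2 * c * (F t - F τ₀))) ≤
        (c / 4) * Real.exp (-2 * c * F t) *
          ∫ τ in (0:ℝ)..t, Real.exp (2 * c * F τ) * (f τ) ^ 2 := by
  classical
  -- monotone extension of `f` to all of `ℝ`
  set f1 : ℝ → ℝ := fun x => if x < 0 then 1 else f x with hf1_def
  have hf1_eq : ∀ x, 0 ≤ x → f1 x = f x := by
    intro x hx; simp [f1, not_lt.2 hx]
  have hf1_one : ∀ x, 1 ≤ f1 x := by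
    intro x
    by_cases hx : x < 0
    · simp [f1, hx]
    · rw [hf1_eq x (not_lt.1 hx)]; exact hf_range x (not_lt.1 hx)
  have hf1_mono : Monotone f1 := by
    intro x y hxy
    by_cases hx : x < 0
    · by_cases hy : y < 0
      · simp [f1, hx, hy]
      · simp only [f1, if_pos hx, if_neg hy]
        exact hf_range y (not_lt.1 hy)
    · have hy : ¬ y < 0 := fun h => hx (lt_of_le_of_lt hxy h)
      simp only [f1, if_neg hx, if_neg hy]
      exact hf_mono (not_lt.1 hx) (not_lt.1 hy) hxy
  -- its right-continuous modification
  set g : ℝ → ℝ := Function.rightLim f1 with hg_def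
  have hg_mono : Monotone g := hf1_mono.rightLim
  have hg_ge : ∀ x, f1 x ≤ g x := fun x => hf1_mono.le_rightLim le_rfl
  have hg_le : ∀ x y, x < y → g x ≤ f1 y := fun x y h => hf1_mono.rightLim_le h
  have hg_one : ∀ x, 1 ≤ g x := fun x => (hf1_one x).trans (hg_ge x)
  have hae : f1 =ᵐ[(volume : Measure ℝ)] g := by
    have hsub : {x | f1 x ≠ g x} ⊆ {x | ¬ ContinuousAt f1 x} := by
      intro x hx hc'
      exact hx (((hf1_mono.continuousWithinAt_Ioi_iff_rightLim_eq).1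
        hc'.continuousWithinAt).symm)
    have h0 : volume {x | f1 x ≠ g x} = 0 :=
      measure_mono_null hsub (hf1_mono.countable_not_continuousAt.measure_zero _)
    rw [Filter.EventuallyEq, ae_iff]
    exact h0
  have hInt : ∀ a b : ℝ, IntervalIntegrable f1 volume a b := fun a b =>
    hf1_mono.intervalIntegrable
  -- the primitive
  set F1 : ℝ → ℝ := fun t => ∫ τ in (0:ℝ)..t, f1 τ with hF1_def
  have hF1_cont : Continuous F1 := intervalIntegral.continuous_primitive hInt 0
  have hF1_sub : ∀ a b : ℝ, F1 b - F1 a = ∫ τ in a..b, f1 τ := by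
    intro a b
    have := intervalIntegral.integral_add_adjacent_intervals (hInt 0 a) (hInt a b)
    simp only [F1]
    linarith [this]
  have hF1_mono : Monotone F1 := by
    intro a b hab
    have h1 : (0:ℝ) ≤ ∫ τ in a..b, f1 τ :=
      intervalIntegral.integral_nonneg hab (fun x _ => le_trans zero_le_one (hf1_one x))
    have := hF1_sub a b
    linarith
  have hF1_ge : ∀ t : ℝ, 0 ≤ t → t ≤ F1 t := by
    intro t ht
    have h1 : ∫ τ in (0:ℝ)..t, (1:ℝ) ≤ ∫ τ in (0:ℝ)..t, f1 τ :=
      intervalIntegral.integral_mono_on ht intervalIntegrable_const (hInt 0 t)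
        (fun x _ => hf1_one x)
    simpa using h1
  have hFF1 : ∀ t : ℝ, 0 ≤ t → F t = F1 t := by
    intro t ht
    rw [hF]
    exact intervalIntegral.integral_congr (fun x hx => by
      rw [Set.uIcc_of_le ht] at hx
      exact (hf1_eq x hx.1).symm)
  -- the right derivative of `F1` is `g`
  have hFderiv : ∀ x : ℝ, HasDerivWithinAt F1 (g x) (Set.Ioi x) x := by
    intro x
    rw [hasDerivWithinAt_iff_tendsto_slope]
    have hIoi : Set.Ioi x \ {x} = Set.Ioi x :=
      Set.diff_singleton_eq_self (by simp)
    rw [hIoi]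
    apply tendsto_of_tendsto_of_tendsto_of_le_of_le' tendsto_const_nhds
      (hf1_mono.tendsto_rightLim x)
    · filter_upwards [self_mem_nhdsWithin] with u hu
      have hxu : x < u := hu
      have h2 : g x * (u - x) ≤ ∫ τ in x..u, f1 τ := by
        rw [intervalIntegral.integral_of_le hxu.le]
        have hconst : ∫ _ in Set.Ioc x u, (g x : ℝ) ∂volume = g x * (u - x) := by
          rw [setIntegral_const, smul_eq_mul, measureReal_def, Real.volume_Ioc,
            ENNReal.toReal_ofReal (sub_nonneg.2 hxu.le)]
          ring
        rw [← hconst]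
        apply setIntegral_mono_on
        · simp
        · exact (hInt x u).1.mono_set (by simp)
        · exact measurableSet_Ioc
        · intro τ hτ
          exact hg_le x τ hτ.1
      rw [slope_def_field, le_div_iff₀ (sub_pos.2 hxu), hF1_sub x u]
      exact h2
    · filter_upwards [self_mem_nhdsWithin] with u hu
      have hxu : x < u := hu
      have h2 : (∫ τ in x..u, f1 τ) ≤ f1 u * (u - x) := by
        have h3 : (∫ τ in x..u, f1 τ) ≤ ∫ τ in x..u, (f1 u : ℝ) :=
          intervalIntegral.integral_mono_on hxu.le (hInt x u) intervalIntegrable_const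
            (fun τ hτ => hf1_mono hτ.2)
        simpa [mul_comm] using h3
      rw [slope_def_field, div_le_iff₀ (sub_pos.2 hxu), hF1_sub x u]
      exact h2
  -- right derivative of `exp (2 c F1)`
  have hGderiv : ∀ x : ℝ,
      HasDerivWithinAt (fun u => Real.exp (2 * c * F1 u))
        (Real.exp (2 * c * F1 x) * (2 * c * g x)) (Set.Ioi x) x := by
    intro x
    have h1 : HasDerivWithinAt (fun u => 2 * c * F1 u) (2 * c * g x) (Set.Ioi x) x :=
      (hFderiv x).const_mul (2 * c)
    exact (Real.hasDerivAt_exp (2 * c * F1 x)).comp_hasDerivWithinAt x h1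
  -- monotonicity of the integrands
  have hφ_mono : Monotone (fun τ => Real.exp (2 * c * F1 τ) * (2 * c * g τ)) := by
    intro x y hxy
    have e1 : Real.exp (2 * c * F1 x) ≤ Real.exp (2 * c * F1 y) :=
      Real.exp_le_exp.2 (by nlinarith [hF1_mono hxy])
    have e2 : 2 * c * g x ≤ 2 * c * g y := by nlinarith [hg_mono hxy]
    have e3 : (0:ℝ) ≤ 2 * c * g x := by nlinarith [hg_one x]
    exact mul_le_mul e1 e2 e3 (Real.exp_pos _).le
  have hφ2_mono : Monotone (fun τ => Real.exp (2 * c * F1 τ) * (f1 τ) ^ 2) := by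
    intro x y hxy
    have e1 : Real.exp (2 * c * F1 x) ≤ Real.exp (2 * c * F1 y) :=
      Real.exp_le_exp.2 (by nlinarith [hF1_mono hxy])
    have e2 : (f1 x) ^ 2 ≤ (f1 y) ^ 2 := by nlinarith [hf1_mono hxy, hf1_one x, hf1_one y]
    exact mul_le_mul e1 e2 (by positivity) (Real.exp_pos _).le
  have hφ3_mono : Monotone (fun τ => Real.exp (2 * c * F1 τ) * (g τ) ^ 2) := by
    intro x y hxy
    have e1 : Real.exp (2 * c * F1 x) ≤ Real.exp (2 * c * F1 y) :=
      Real.exp_le_exp.2 (by nlinarith [hF1_mono hxy])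
    have e2 : (g x) ^ 2 ≤ (g y) ^ 2 := by nlinarith [hg_mono hxy, hg_one x, hg_one y]
    exact mul_le_mul e1 e2 (by positivity) (Real.exp_pos _).le
  -- fundamental theorem of calculus inequality
  have hkey : ∀ a b : ℝ, a ≤ b →
      Real.exp (2 * c * F1 b) - Real.exp (2 * c * F1 a) ≤
        ∫ τ in a..b, Real.exp (2 * c * F1 τ) * (2 * c * g τ) := by
    intro a b hab
    apply intervalIntegral.sub_le_integral_of_hasDeriv_right_of_le hab
    · exact (Real.continuous_exp.comp (continuous_const.mul hF1_cont)).continuousOn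
    · exact fun x _ => hGderiv x
    · rw [← intervalIntegrable_iff_integrableOn_Icc_of_le hab]
      exact hφ_mono.intervalIntegrable
    · exact fun x _ => le_rfl
  -- main quantitative estimate
  have main : ∀ τ₀ : ℝ, 0 < τ₀ → ∀ t : ℝ, τ₀ < t →
      (f τ₀ / 8) * (1 - Real.exp (-2 * c * (F t - F τ₀))) ≤
        (c / 4) * Real.exp (-2 * c * F t) *
          ∫ τ in (0:ℝ)..t, Real.exp (2 * c * F τ) * (f τ) ^ 2 := by
    intro τ₀ hτ₀ t ht
    have h0t : (0:ℝ) < t := hτ₀.trans ht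
    have hIcongr : (∫ τ in (0:ℝ)..t, Real.exp (2 * c * F τ) * (f τ) ^ 2) =
        ∫ τ in (0:ℝ)..t, Real.exp (2 * c * F1 τ) * (f1 τ) ^ 2 := by
      apply intervalIntegral.integral_congr
      intro x hx
      rw [Set.uIcc_of_le h0t.le] at hx
      simp only [hFF1 x hx.1, hf1_eq x hx.1]
    have hsplit : (∫ τ in (0:ℝ)..t, Real.exp (2 * c * F1 τ) * (f1 τ) ^ 2) =
        (∫ τ in (0:ℝ)..τ₀, Real.exp (2 * c * F1 τ) * (f1 τ) ^ 2) +
          ∫ τ in τ₀..t, Real.exp (2 * c * F1 τ) * (f1 τ) ^ 2 :=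
      (intervalIntegral.integral_add_adjacent_intervals hφ2_mono.intervalIntegrable
        hφ2_mono.intervalIntegrable).symm
    have hfirst : (0:ℝ) ≤ ∫ τ in (0:ℝ)..τ₀, Real.exp (2 * c * F1 τ) * (f1 τ) ^ 2 :=
      intervalIntegral.integral_nonneg hτ₀.le (fun x _ => by positivity)
    have hcongr2 : (∫ τ in τ₀..t, Real.exp (2 * c * F1 τ) * (f1 τ) ^ 2) =
        ∫ τ in τ₀..t, Real.exp (2 * c * F1 τ) * (g τ) ^ 2 := by
      apply intervalIntegral.integral_congr_ae
      filter_upwards [hae] with x hx _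
      rw [hx]
    have hmono2 : (f1 τ₀ / (2 * c)) *
        (∫ τ in τ₀..t, Real.exp (2 * c * F1 τ) * (2 * c * g τ)) ≤
        ∫ τ in τ₀..t, Real.exp (2 * c * F1 τ) * (g τ) ^ 2 := by
      rw [← intervalIntegral.integral_const_mul]
      apply intervalIntegral.integral_mono_on ht.le
        (hφ_mono.intervalIntegrable.const_mul _) hφ3_mono.intervalIntegrable
      intro x hx
      have h1 : f1 τ₀ ≤ g x := le_trans (hg_ge τ₀) (hg_mono hx.1)
      have h2 : (0:ℝ) < Real.exp (2 * c * F1 x) := Real.exp_pos _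
      have h3 : (0:ℝ) ≤ g x := le_trans zero_le_one (hg_one x)
      have hc' : c ≠ 0 := ne_of_gt hc
      have : f1 τ₀ / (2 * c) * (Real.exp (2 * c * F1 x) * (2 * c * g x)) =
          f1 τ₀ * (Real.exp (2 * c * F1 x) * g x) := by
        field_simp
      rw [this]
      have : Real.exp (2 * c * F1 x) * (g x) ^ 2 =
          g x * (Real.exp (2 * c * F1 x) * g x) := by ring
      rw [this]
      apply mul_le_mul_of_nonneg_right h1 (by positivity)
    have hkey' : (f1 τ₀ / (2 * c)) *
        (Real.exp (2 * c * F1 t) - Real.exp (2 * c * F1 τ₀)) ≤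
        (f1 τ₀ / (2 * c)) *
        (∫ τ in τ₀..t, Real.exp (2 * c * F1 τ) * (2 * c * g τ)) := by
      apply mul_le_mul_of_nonneg_left (hkey τ₀ t ht.le)
      apply div_nonneg (by linarith [hf1_one τ₀]) (by linarith)
    -- put everything together
    have hItot : (f1 τ₀ / (2 * c)) *
        (Real.exp (2 * c * F1 t) - Real.exp (2 * c * F1 τ₀)) ≤
        ∫ τ in (0:ℝ)..t, Real.exp (2 * c * F τ) * (f τ) ^ 2 := by
      rw [hIcongr, hsplit, hcongr2]
      linarith
    have hposfac : (0:ℝ) < (c / 4) * Real.exp (-2 * c * F t) := by positivity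
    have hmul := mul_le_mul_of_nonneg_left hItot hposfac.le
    refine le_trans (le_of_eq ?_) hmul
    rw [hFF1 t h0t.le, hFF1 τ₀ hτ₀.le, ← hf1_eq τ₀ hτ₀.le]
    have e1 : Real.exp (-2 * c * (F1 t - F1 τ₀)) =
        Real.exp (2 * c * F1 τ₀) / Real.exp (2 * c * F1 t) := by
      rw [← Real.exp_sub]; ring_nf
    have e2 : Real.exp (-2 * c * F1 t) = 1 / Real.exp (2 * c * F1 t) := by
      rw [show (-2 : ℝ) * c * F1 t = -(2 * c * F1 t) by ring, Real.exp_neg, one_div]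
    rw [e1, e2]
    have hc' : c ≠ 0 := ne_of_gt hc
    have hE : Real.exp (2 * c * F1 t) ≠ 0 := Real.exp_ne_zero _
    field_simp
    ring
  refine ⟨?_, main⟩
  rw [tendsto_atTop]
  intro M
  obtain ⟨τ₀, hfτ₀, hτ₀pos⟩ :=
    ((hf_lim.eventually_ge_atTop (16 * M)).and (eventually_gt_atTop (0:ℝ))).exists
  filter_upwards [eventually_gt_atTop τ₀,
    eventually_ge_atTop (F τ₀ + Real.log 2 / (2 * c)), eventually_ge_atTop (0:ℝ)]
    with t ht1 ht2 ht3
  have hmain := main τ₀ hτ₀pos t ht1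
  have hFt : t ≤ F t := by rw [hFF1 t ht3]; exact hF1_ge t ht3
  have hΔ : Real.log 2 / (2 * c) ≤ F t - F τ₀ := by linarith
  have hexp : Real.exp (-2 * c * (F t - F τ₀)) ≤ 1 / 2 := by
    have h1 : Real.log 2 ≤ 2 * c * (F t - F τ₀) := by
      rw [div_le_iff₀ (by positivity)] at hΔ
      linarith
    calc Real.exp (-2 * c * (F t - F τ₀)) ≤ Real.exp (-Real.log 2) :=
          Real.exp_le_exp.2 (by linarith)
      _ = 1 / 2 := by
          rw [Real.exp_neg, Real.exp_log (by norm_num : (0:ℝ) < 2)]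
          norm_num
  have hf0 : (1:ℝ) ≤ f τ₀ := hf_range τ₀ hτ₀pos.le
  have h4 : f τ₀ * Real.exp (-2 * c * (F t - F τ₀)) ≤ f τ₀ * (1 / 2) :=
    mul_le_mul_of_nonneg_left hexp (by linarith)
  have h5 : M ≤ (f τ₀ / 8) * (1 - Real.exp (-2 * c * (F t - F τ₀))) := by
    nlinarith
  linarith
end

section
/- Let c > 0 and g : [0,∞) → [0,∞) be continuous, nonincreasing with g(t) → 0 and ∫₀ᵗ g(τ)dτ → ∞. If V solves V'(t) = −2c·g(t)·V(t) + (c/4)·g(t)² with V(0) = 0, then limsup over all t of V(t) ≤ 1/8 and V(t) → 0 as t → ∞. -/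
open Real Filter MeasureTheory intervalIntegral

theorem stmt_14 (c : ℝ) (hc : 0 < c) (g : ℝ → ℝ) (hg_cont : Continuous g)
    (hg_nonneg : ∀ t : ℝ, 0 ≤ t → 0 ≤ g t)
    (hg_mono : AntitoneOn g (Set.Ici 0))
    (hg_lim : Tendsto g atTop (nhds 0))
    (hg_int : Tendsto (fun t : ℝ => ∫ τ in (0:ℝ)..t, g τ) atTop atTop)
    (V : ℝ → ℝ) (hV0 : V 0 = 0)
    (hV : ∀ t : ℝ, HasDerivAt V (-2 * c * g t * V t + (c / 4) * (g t) ^ 2) t) :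
    Filter.limsup V atTop ≤ 1 / 8 ∧ Tendsto V atTop (nhds 0) := by
  set G : ℝ → ℝ := fun t => ∫ τ in (0:ℝ)..t, g τ with hGdef
  have hGd : ∀ t, HasDerivAt G (g t) t := fun t =>
    intervalIntegral.integral_hasDerivAt_right (hg_cont.intervalIntegrable _ _)
      (hg_cont.stronglyMeasurableAtFilter _ _) hg_cont.continuousAt
  set E : ℝ → ℝ := fun t => Real.exp (2*c*G t) with hEdef
  have hEd : ∀ t, HasDerivAt E (2*c*g t * E t) t := by
    intro t
    have h1 : HasDerivAt (fun t => 2*c*G t) (2*c*g t) t := (hGd t).const_mul _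
    simpa [hEdef, mul_comm] using h1.exp
  have hEc : Continuous E := continuous_iff_continuousAt.2 fun t => (hEd t).continuousAt
  have hEpos : ∀ t, 0 < E t := fun t => Real.exp_pos _
  -- the integrand
  set F : ℝ → ℝ := fun τ => E τ * ((c/4) * g τ ^ 2) with hFdef
  have hFc : Continuous F := hEc.mul (continuous_const.mul (hg_cont.pow 2))
  have hWd : ∀ t, HasDerivAt (fun t => E t * V t) (F t) t := by
    intro t
    have h := (hEd t).mul (hV t)
    refine h.congr_deriv ?_
    simp only [hFdef]; ring
  have hWint : ∀ t, E t * V t = ∫ τ in (0:ℝ)..t, F τ := by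
    intro t
    have h := intervalIntegral.integral_eq_sub_of_hasDerivAt
      (f := fun t => E t * V t) (f' := F) (a := 0) (b := t)
      (fun x _ => hWd x) (hFc.intervalIntegrable _ _)
    rw [h, hV0, mul_zero, sub_zero]
  -- E derivative integral: ∫ s..t, 2c g E = E t - E s
  have hEint : ∀ s t : ℝ, ∫ τ in s..t, 2*c*g τ * E τ = E t - E s := fun s t =>
    intervalIntegral.integral_eq_sub_of_hasDerivAt (fun x _ => hEd x)
      ((continuous_const.mul hg_cont).mul hEc |>.intervalIntegrable _ _)
  have hVeq : ∀ t, V t = (E t)⁻¹ * ∫ τ in (0:ℝ)..t, F τ := by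
    intro t
    rw [← hWint t]
    field_simp
    exact (mul_div_cancel_right₀ _ (hEpos t).ne').symm
  have hVnonneg : ∀ t : ℝ, 0 ≤ t → 0 ≤ V t := by
    intro t ht
    rw [hVeq t]
    refine mul_nonneg (inv_nonneg.2 (hEpos t).le) ?_
    refine intervalIntegral.integral_nonneg ht ?_
    intro x _
    exact mul_nonneg (hEpos x).le (mul_nonneg (by positivity) (sq_nonneg _))
  -- tail bound: for 0 ≤ s ≤ t, ∫ s..t F ≤ g s * E t / 8
  have htail : ∀ s t : ℝ, 0 ≤ s → s ≤ t → (∫ τ in s..t, F τ) ≤ g s * E t / 8 := by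
    intro s t hs hst
    have h1 : (∫ τ in s..t, F τ) ≤ ∫ τ in s..t, (g s / 8) * (2*c*g τ * E τ) := by
      refine intervalIntegral.integral_mono_on hst (hFc.intervalIntegrable _ _)
        ((continuous_const.mul ((continuous_const.mul hg_cont).mul hEc)).intervalIntegrable _ _) ?_
      intro x hx
      have hgx : g x ≤ g s := hg_mono (Set.mem_Ici.2 hs) (Set.mem_Ici.2 (hs.trans hx.1)) hx.1
      have hgx0 : 0 ≤ g x := hg_nonneg x (hs.trans hx.1)
      have hEx : 0 ≤ E x := (hEpos x).le
      simp only [hFdef]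
      nlinarith [mul_le_mul_of_nonneg_left hgx (mul_nonneg hgx0 hEx)]
    rw [intervalIntegral.integral_const_mul, hEint s t] at h1
    have hgs : 0 ≤ g s := hg_nonneg s hs
    have : E t - E s ≤ E t := by linarith [(hEpos s).le, hEpos s]
    nlinarith [hEpos s]
  -- E t → ∞
  have hEtop : Tendsto E atTop atTop := by
    have h1 : Tendsto (fun t => 2*c*G t) atTop atTop :=
      hg_int.const_mul_atTop (by linarith)
    exact Real.tendsto_exp_atTop.comp h1
  have hEinv : Tendsto (fun t => (E t)⁻¹) atTop (nhds 0) :=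
    tendsto_inv_atTop_zero.comp hEtop
  -- main convergence
  have hmain : Tendsto V atTop (nhds 0) := by
    rw [Metric.tendsto_atTop]
    intro ε hε
    -- choose s with g s < 4ε
    have h4 : (0:ℝ) < 4 * ε := by linarith
    obtain ⟨s₀, hs₀⟩ := (Metric.tendsto_atTop.1 hg_lim (4*ε) h4)
    set s := max s₀ 0 with hsdef
    have hs0 : (0:ℝ) ≤ s := le_max_right _ _
    have hgs : g s < 4 * ε := by
      have := hs₀ s (le_max_left _ _)
      rw [Real.dist_eq, sub_zero] at this
      exact lt_of_le_of_lt (le_abs_self _) this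
    set Cs : ℝ := ∫ τ in (0:ℝ)..s, F τ with hCs
    have hC0 : Tendsto (fun t => (E t)⁻¹ * Cs) atTop (nhds 0) := by
      simpa using hEinv.mul_const Cs
    obtain ⟨N, hN⟩ := (Metric.tendsto_atTop.1 hC0 (ε/2) (by linarith))
    refine ⟨max N s, fun t ht => ?_⟩
    have hts : s ≤ t := le_trans (le_max_right _ _) ht
    have htN : N ≤ t := le_trans (le_max_left _ _) ht
    have ht0 : (0:ℝ) ≤ t := hs0.trans hts
    have hsplit : (∫ τ in (0:ℝ)..t, F τ) = Cs + ∫ τ in s..t, F τ := by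
      rw [hCs, intervalIntegral.integral_add_adjacent_intervals
        (hFc.intervalIntegrable _ _) (hFc.intervalIntegrable _ _)]
    have hbound : V t ≤ (E t)⁻¹ * Cs + g s / 8 := by
      rw [hVeq t, hsplit, mul_add]
      have h2 : (E t)⁻¹ * (∫ τ in s..t, F τ) ≤ (E t)⁻¹ * (g s * E t / 8) :=
        mul_le_mul_of_nonneg_left (htail s t hs0 hts) (inv_nonneg.2 (hEpos t).le)
      have h3 : (E t)⁻¹ * (g s * E t / 8) = g s / 8 := by
        field_simp
        exact mul_div_cancel_left₀ _ (hEpos t).ne'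
      linarith
    have hCb : (E t)⁻¹ * Cs < ε/2 := by
      have := hN t htN
      rw [Real.dist_eq, sub_zero] at this
      exact lt_of_le_of_lt (le_abs_self _) this
    have hVt : 0 ≤ V t := hVnonneg t ht0
    rw [Real.dist_eq, sub_zero, abs_of_nonneg hVt]
    calc V t ≤ (E t)⁻¹ * Cs + g s / 8 := hbound
      _ < ε/2 + ε/2 := by linarith
      _ = ε := by ring
  refine ⟨?_, hmain⟩
  rw [hmain.limsup_eq]
  norm_num
end
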